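/- arXiv:1704.07039 — 3 statements merged into one kernel-verified Lean document; each statement's English description precedes it below -/
import Mathlib

section
/- For a standard Young tableau T of shape a partition λ of n, define σ(T) ∈ {±1}^{n-1} by σ(T)_i = +1 if i appears weakly above i+1 in T and σ(T)_i = -1 otherwise. Then the Schur function s_λ equals the sum over all standard Young tableaux T of shape λ of the fundamental quasisymmetric function Q_{σ(T)}. -/
/-- Standard Young tableaux of shape `μ`, with entries `0, …, μ.card - 1`,
strictly increasing along rows and columns. -/
def SYT (μ : YoungDiagram) : Type :=
  {e : {c // c ∈ μ.cells} ≃ Fin μ.card //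
    ∀ c c' : {c // c ∈ μ.cells}, c.1.1 ≤ c'.1.1 → c.1.2 ≤ c'.1.2 → c ≠ c' →
      e c < e c'}

/-- The descent signature of a standard Young tableau: `sytSgn T j = true` (`+1`)
exactly when the entry `j` appears weakly above the entry `j+1` in `T`. -/
def sytSgn {μ : YoungDiagram} (T : SYT μ) (j : ℕ) : Bool :=
  if h : j + 1 < μ.card then
    decide ((T.1.symm ⟨j + 1, h⟩).1.1 ≤ (T.1.symm ⟨j, Nat.lt_of_succ_lt h⟩).1.1)
  else true

/-- The coefficient of the monomial `x^m` in the fundamental quasisymmetric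
function `Q_s` of degree `n`: the number of weakly increasing sequences
`i_0 ≤ i_1 ≤ ⋯ ≤ i_{n-1}` with `i_j < i_{j+1}` whenever `s j = -1` (`false`),
whose content is `m`. -/
noncomputable def QCoeff (n : ℕ) (s : ℕ → Bool) (m : ℕ →₀ ℕ) : ℕ :=
  Nat.card {f : Fin n → ℕ //
    (∀ j k : Fin n, j ≤ k → f j ≤ f k) ∧
    (∀ (j : ℕ) (h : j + 1 < n), s j = false →
        f ⟨j, Nat.lt_of_succ_lt h⟩ < f ⟨j + 1, h⟩) ∧
    (∀ v : ℕ, m v = Nat.card {j : Fin n // f j = v})}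

/-- The coefficient of the monomial `x^m` in the Schur function `s_μ`: the number
of semistandard Young tableaux of shape `μ` and weight `m`. -/
noncomputable def SchurCoeff (μ : YoungDiagram) (m : ℕ →₀ ℕ) : ℕ :=
  Nat.card {T : SemistandardYoungTableau μ //
    ∀ v : ℕ, m v = (μ.cells.filter fun c => T c.1 c.2 = v).card}

/-!
Gessel's standardization bijection. Number the cells of a semistandard tableau `S` in increasing
order of entry, breaking ties left to right: this is a standard tableau `T`, and the entries of `S`
read in this order form a weakly increasing sequence `f`. Equal entries of `S` lie in a horizontal
strip, so `f` increases strictly at every descent of `T` (an `i` with `i + 1` in a later row).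
Conversely, every weakly increasing `f` that is strict at the descents of `T`, written back along
`T`, is semistandard and standardizes to `T`. So semistandard tableaux of weight `m` are in
bijection with pairs `(T, f)`, and the `f` belonging to `T` are counted by `Q_{σ(T)}`.
-/

open Function

section Rank

variable {α β : Type*} [Fintype α] [LinearOrder β] {k : α → β} (hk : Injective k) {n : ℕ}
  (hn : Fintype.card α = n)

noncomputable def rankEquiv : α ≃ Fin n :=
  letI := LinearOrder.lift' k hk
  (Fintype.orderIsoFinOfCardEq α hn).symm.toEquiv

lemma rankEquiv_lt_iff {a b : α} : rankEquiv hk hn a < rankEquiv hk hn b ↔ k a < k b :=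
  letI := LinearOrder.lift' k hk
  (Fintype.orderIsoFinOfCardEq α hn).symm.lt_iff_lt

lemma eq_rankEquiv (e : α ≃ Fin n) (he : ∀ a b, e a < e b → k a < k b) :
    e = rankEquiv hk hn := by
  let := LinearOrder.lift' k hk
  have hmono : StrictMono e.symm := fun i j hij => he _ _ (by simpa using hij)
  have hiso := Subsingleton.elim (hmono.orderIsoOfSurjective e.symm e.symm.surjective)
    (Fintype.orderIsoFinOfCardEq α hn)
  refine Equiv.ext fun a => ?_
  simp only [rankEquiv, ← hiso]
  have h := StrictMono.orderIsoOfSurjective_symm_apply_self _ hmono e.symm.surjective (e a)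
  rw [Equiv.symm_apply_apply] at h
  exact h.symm

end Rank

lemma Fin.le_of_monotone_of_apply_eq {α β : Type*} [PartialOrder α] [Preorder β] {n : ℕ}
    {f : Fin n → α} {g : Fin n → β} (hf : Monotone f)
    (hg : ∀ (j : ℕ) (h : j + 1 < n), f ⟨j, by omega⟩ = f ⟨j + 1, h⟩ →
      g ⟨j + 1, h⟩ ≤ g ⟨j, by omega⟩)
    {a b : Fin n} (hab : a ≤ b) (heq : f a = f b) : g b ≤ g a := by
  obtain ⟨a, ha⟩ := a
  obtain ⟨b, hb⟩ := b
  change a ≤ b at hab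
  induction b, hab using Nat.le_induction with
  | base => exact le_rfl
  | succ b hab ih =>
    have hfa : f ⟨a, ha⟩ ≤ f ⟨b, by omega⟩ := hf (Fin.mk_le_mk.2 hab)
    have hfb : f ⟨b, by omega⟩ ≤ f ⟨b + 1, hb⟩ := hf (Fin.mk_le_mk.2 b.le_succ)
    have hstep : f ⟨b, by omega⟩ = f ⟨b + 1, hb⟩ := le_antisymm hfb (heq ▸ hfa)
    exact (hg b hb hstep).trans (ih (by omega) (heq.trans hstep.symm))

lemma Finset.natCard_subtype_filter {α : Type*} (s : Finset α) (p : α → Prop)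
    [DecidablePred p] :
    Nat.card {x : s // p x} = (s.filter p).card := by
  rw [← Nat.card_eq_finsetCard]
  exact Nat.card_congr ((Equiv.subtypeSubtypeEquivSubtypeInter (· ∈ s) p).trans
    (Equiv.subtypeEquivRight fun _ => Finset.mem_filter.symm))

lemma finite_fun_of_content {n : ℕ} (m : ℕ →₀ ℕ) :
    Finite {f : Fin n → ℕ // ∀ v, m v = Nat.card {j // f j = v}} := by
  refine Finite.of_injective (β := Fin n → m.support)
    (fun f j => ⟨f.1 j, Finsupp.mem_support_iff.2 ?_⟩) fun f f' h => ?_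
  · rw [f.2 (f.1 j)]
    exact Nat.card_ne_zero.2 ⟨⟨⟨j, rfl⟩⟩, inferInstance⟩
  · exact Subtype.ext (funext fun j => congrArg Subtype.val (congrFun h j))

namespace SYT

variable {μ : YoungDiagram}

noncomputable instance : Fintype (SYT μ) := by unfold SYT; exact Subtype.fintype _

def row (T : SYT μ) (k : Fin μ.card) : ℕ := (T.1.symm k).1.1

@[simp]
lemma row_apply (T : SYT μ) (c : μ.cells) : T.row (T.1 c) = c.1.1 := by
  simp [row]

lemma sytSgn_eq_false_iff (T : SYT μ) {j : ℕ} (h : j + 1 < μ.card) :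
    sytSgn T j = false ↔ T.row ⟨j, by omega⟩ < T.row ⟨j + 1, h⟩ := by
  simp [sytSgn, h, row]

def Compatible (T : SYT μ) (f : Fin μ.card → ℕ) : Prop :=
  Monotone f ∧ ∀ (j : ℕ) (h : j + 1 < μ.card), sytSgn T j = false →
    f ⟨j, by omega⟩ < f ⟨j + 1, h⟩

variable {T : SYT μ} {f : Fin μ.card → ℕ}

lemma Compatible.row_le (hf : T.Compatible f) {a b : Fin μ.card} (hab : a ≤ b)
    (heq : f a = f b) : T.row b ≤ T.row a :=
  Fin.le_of_monotone_of_apply_eq hf.1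
    (fun j h hj => not_lt.1 fun hlt => (hf.2 j h ((sytSgn_eq_false_iff T h).2 hlt)).ne hj)
    hab heq

lemma Compatible.lt_of_row_lt (hf : T.Compatible f) {a b : Fin μ.card} (hab : a ≤ b)
    (hrow : T.row a < T.row b) : f a < f b :=
  (hf.1 hab).lt_of_ne fun heq => (hf.row_le hab heq).not_gt hrow

def toSSYT (T : SYT μ) (hf : T.Compatible f) : SemistandardYoungTableau μ where
  entry i j := if h : (i, j) ∈ μ then f (T.1 ⟨(i, j), h⟩) else 0
  row_weak' := by
    intro i j₁ j₂ hj hc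
    have hc₁ : (i, j₁) ∈ μ := μ.up_left_mem le_rfl hj.le hc
    simp only [dif_pos hc₁, dif_pos hc]
    exact hf.1 (T.2 ⟨_, hc₁⟩ ⟨_, hc⟩ le_rfl hj.le (by simp [hj.ne])).le
  col_strict' := by
    intro i₁ i₂ j hi hc
    have hc₁ : (i₁, j) ∈ μ := μ.up_left_mem hi.le le_rfl hc
    simp only [dif_pos hc₁, dif_pos hc]
    exact hf.lt_of_row_lt (T.2 ⟨_, hc₁⟩ ⟨_, hc⟩ hi.le le_rfl (by simp [hi.ne])).le
      (by simpa using hi)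
  zeros' := fun h => dif_neg h

@[simp]
lemma toSSYT_apply (hf : T.Compatible f) (c : μ.cells) :
    T.toSSYT hf c.1.1 c.1.2 = f (T.1 c) :=
  dif_pos c.2

lemma natCard_toSSYT_eq (hf : T.Compatible f) (v : ℕ) :
    (μ.cells.filter fun c => T.toSSYT hf c.1 c.2 = v).card = Nat.card {j // f j = v} := by
  rw [← Finset.natCard_subtype_filter]
  exact Nat.card_congr (T.1.subtypeEquiv fun c => by simp)

end SYT

namespace SemistandardYoungTableau

variable {μ : YoungDiagram} (S : SemistandardYoungTableau μ)

lemma col_lt_of_row_lt_of_eq {i i' j j' : ℕ} (hc' : (i', j') ∈ μ) (hi : i < i')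
    (heq : S i j = S i' j') : j' < j := by
  by_contra! hj
  have := S.col_strict hi (μ.up_left_mem le_rfl hj hc')
  have := S.row_weak_of_le hj hc'
  omega

-- Equal entries form a horizontal strip, so breaking ties by column makes this injective.
def stdKey (c : μ.cells) : ℕ ×ₗ ℕ := toLex (S c.1.1 c.1.2, c.1.2)

lemma stdKey_injective : Injective S.stdKey := by
  intro c c' h
  simp only [stdKey, toLex_inj, Prod.mk.injEq] at h
  obtain ⟨hval, hcol⟩ := h
  refine Subtype.ext (Prod.ext (le_antisymm ?_ ?_) hcol)
  · exact not_lt.1 fun hi => (S.col_lt_of_row_lt_of_eq c.2 hi hval.symm).ne hcol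
  · exact not_lt.1 fun hi => (S.col_lt_of_row_lt_of_eq c'.2 hi hval).ne hcol.symm

lemma stdKey_lt_of_le {c c' : μ.cells} (hi : c.1.1 ≤ c'.1.1) (hj : c.1.2 ≤ c'.1.2)
    (hne : c ≠ c') : S.stdKey c < S.stdKey c' := by
  have hc' := c'.2
  have hval : S c.1.1 c.1.2 ≤ S c'.1.1 c'.1.2 :=
    (S.col_weak hi (μ.up_left_mem le_rfl hj hc')).trans (S.row_weak_of_le hj hc')
  exact (Prod.Lex.toLex_mono (show (S c.1.1 c.1.2, c.1.2) ≤ (S c'.1.1 c'.1.2, c'.1.2) from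
    ⟨hval, hj⟩)).lt_of_ne (S.stdKey_injective.ne hne)

noncomputable def standardize : SYT μ :=
  ⟨rankEquiv S.stdKey_injective (Fintype.card_coe μ.cells),
    fun _ _ hi hj hne => (rankEquiv_lt_iff _ _).2 (S.stdKey_lt_of_le hi hj hne)⟩

noncomputable def stdWord (k : Fin μ.card) : ℕ :=
  S (S.standardize.1.symm k).1.1 (S.standardize.1.symm k).1.2

@[simp]
lemma stdWord_apply (c : μ.cells) : S.stdWord (S.standardize.1 c) = S c.1.1 c.1.2 := by
  simp [stdWord]

lemma standardize_lt_iff {c c' : μ.cells} :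
    S.standardize.1 c < S.standardize.1 c' ↔ S.stdKey c < S.stdKey c' :=
  rankEquiv_lt_iff _ _

lemma stdKey_standardize_lt {a b : Fin μ.card} (hab : a < b) :
    S.stdKey (S.standardize.1.symm a) < S.stdKey (S.standardize.1.symm b) :=
  S.standardize_lt_iff.1 (by simpa using hab)

lemma standardize_compatible : S.standardize.Compatible S.stdWord := by
  refine ⟨fun a b hab => ?_, fun j h hdes => ?_⟩
  · obtain hab | rfl := hab.lt_or_eq
    · exact Prod.Lex.monotone_fst _ _ (S.stdKey_standardize_lt hab).le
    · exact le_rfl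
  · set c := S.standardize.1.symm ⟨j, by omega⟩
    set c' := S.standardize.1.symm ⟨j + 1, h⟩
    have hrow : c.1.1 < c'.1.1 := (SYT.sytSgn_eq_false_iff _ h).1 hdes
    have hkey : S.stdKey c < S.stdKey c' := S.stdKey_standardize_lt (Fin.mk_lt_mk.2 j.lt_succ_self)
    rcases Prod.Lex.toLex_lt_toLex.1 hkey with hval | ⟨hval, hcol⟩
    · exact hval
    · exact absurd (S.col_lt_of_row_lt_of_eq c'.2 hrow hval) hcol.not_gt

lemma toSSYT_standardize : S.standardize.toSSYT S.standardize_compatible = S := by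
  ext i j
  by_cases h : (i, j) ∈ μ
  · simpa using SYT.toSSYT_apply S.standardize_compatible ⟨(i, j), h⟩
  · rw [S.zeros h]
    exact dif_neg h

lemma natCard_stdWord_eq (v : ℕ) :
    Nat.card {j // S.stdWord j = v} = (μ.cells.filter fun c => S c.1 c.2 = v).card := by
  rw [← Finset.natCard_subtype_filter]
  exact Nat.card_congr (S.standardize.1.symm.subtypeEquiv fun _ => by simp [stdWord])

end SemistandardYoungTableau

namespace SYT

variable {μ : YoungDiagram} {T : SYT μ} {f : Fin μ.card → ℕ}

lemma stdKey_toSSYT_lt (hf : T.Compatible f) {c c' : μ.cells} (h : T.1 c < T.1 c') :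
    (T.toSSYT hf).stdKey c < (T.toSSYT hf).stdKey c' := by
  simp only [SemistandardYoungTableau.stdKey, toSSYT_apply]
  rcases (hf.1 h.le).lt_or_eq with hval | hval
  · exact Prod.Lex.toLex_lt_toLex.2 (Or.inl hval)
  · refine Prod.Lex.toLex_lt_toLex.2 (Or.inr ⟨hval, not_le.1 fun hcol => ?_⟩)
    have hrow : c'.1.1 ≤ c.1.1 := by simpa using hf.row_le h.le hval
    exact (T.2 c' c hrow hcol (by rintro rfl; exact h.false)).not_gt h

lemma standardize_toSSYT (hf : T.Compatible f) : (T.toSSYT hf).standardize = T :=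
  Subtype.ext (eq_rankEquiv _ _ T.1 fun _ _ => stdKey_toSSYT_lt hf).symm

lemma stdWord_toSSYT (hf : T.Compatible f) : (T.toSSYT hf).stdWord = f := by
  funext k
  simp [SemistandardYoungTableau.stdWord, standardize_toSSYT hf]

end SYT

noncomputable def ssytEquiv (μ : YoungDiagram) (m : ℕ →₀ ℕ) :
    {S : SemistandardYoungTableau μ //
        ∀ v, m v = (μ.cells.filter fun c => S c.1 c.2 = v).card} ≃
      Σ T : SYT μ, {f // T.Compatible f ∧ ∀ v, m v = Nat.card {j // f j = v}} where
  toFun S := ⟨S.1.standardize, S.1.stdWord, S.1.standardize_compatible,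
    fun v => (S.2 v).trans (S.1.natCard_stdWord_eq v).symm⟩
  invFun p := ⟨p.1.toSSYT p.2.2.1, fun v => (p.2.2.2 v).trans (SYT.natCard_toSSYT_eq _ v).symm⟩
  left_inv S := Subtype.ext S.1.toSSYT_standardize
  right_inv := by
    rintro ⟨T, f, hf, -⟩
    exact Sigma.subtype_ext (SYT.standardize_toSSYT hf) (SYT.stdWord_toSSYT hf)

/-- Gessel's expansion: `s_λ = ∑_{T ∈ SYT(λ)} Q_{σ(T)}`, stated coefficientwise. -/
theorem statement0 (n : ℕ) (μ : YoungDiagram) (hμ : μ.card = n) (m : ℕ →₀ ℕ) :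
    SchurCoeff μ m = ∑ᶠ T : SYT μ, QCoeff n (fun j => sytSgn T j) m := by
  subst hμ
  have (T : SYT μ) : Finite {f // T.Compatible f ∧ ∀ v, m v = Nat.card {j // f j = v}} :=
    have := finite_fun_of_content (n := μ.card) m
    Finite.of_injective (Subtype.impEmbedding _ _ fun _ => And.right) (Embedding.injective _)
  rw [SchurCoeff, Nat.card_congr (ssytEquiv μ m), Nat.card_sigma, finsum_eq_sum_of_fintype]
  exact Finset.sum_congr rfl fun T _ => Nat.card_congr (Equiv.subtypeEquivRight fun _ => and_assoc)
end

section
/- Let G be a signed colored graph of type (n,N) satisfying dual equivalence axioms 1, 2, 3, and 5. If every connected component of E_{i-2} ∪ E_{i-1} appears in the allowed 2-color component list (single vertex, path of one (i-2)-edge and one (i-1)-edge, or double edge), then W_i^0(G) = W_i(G), i.e., for every w ∈ W_i(G), every vertex on the (i-1)-package of w has a flat (i-1)-edge. -/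
open Finset

/-- A signed, colored graph of type `(n, N)`: a finite vertex set `V`,
a signature function `sgn v i ∈ {±1}` (encoded as `Bool`, `true` = `+1`)
for `1 ≤ i ≤ N-1`, and edge relations `E i` for each color `1 < i < n`. -/
structure SCG (n N : ℕ) where
  V : Type
  fintypeV : Fintype V
  sgn : V → ℕ → Bool
  E : ℕ → V → V → Prop

namespace SCG

variable {n N : ℕ}

/-- Edges are unordered pairs of distinct vertices with colors `1 < i < n`. -/
def Proper (G : SCG n N) : Prop :=
  ∀ i v w, G.E i v w → G.E i w v ∧ v ≠ w ∧ 1 < i ∧ i < n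

def hasNbr (G : SCG n N) (i : ℕ) (v : G.V) : Prop := ∃ w, G.E i v w

/-- The `i`-neighbor `E_i(v)` of `v` (defaulting to `v` when there is none). -/
noncomputable def nbr (G : SCG n N) (i : ℕ) (v : G.V) : G.V := by
  classical
  exact if h : G.hasNbr i v then h.choose else v

/-- Dual equivalence axiom 1. -/
def Ax1 (G : SCG n N) : Prop :=
  ∀ i, 1 < i → i < n → ∀ w : G.V,
    ((G.sgn w (i - 1) ≠ G.sgn w i) ↔ ∃! x, G.E i w x)

/-- Dual equivalence axiom 2. -/
def Ax2 (G : SCG n N) : Prop :=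
  ∀ i, ∀ w x : G.V, G.E i w x →
    (G.sgn x (i - 1) = !G.sgn w (i - 1)) ∧ (G.sgn x i = !G.sgn w i) ∧
      ∀ h, h + 2 < i ∨ i + 1 < h → G.sgn x h = G.sgn w h

/-- Dual equivalence axiom 3. -/
def Ax3 (G : SCG n N) : Prop :=
  ∀ i, ∀ w x : G.V, G.E i w x →
    ((G.sgn w (i - 2) ≠ G.sgn x (i - 2)) → G.sgn w (i - 2) ≠ G.sgn w (i - 1)) ∧
    ((G.sgn w (i + 1) ≠ G.sgn x (i + 1)) → G.sgn w (i + 1) ≠ G.sgn w i)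

/-- Dual equivalence axiom 5. -/
def Ax5 (G : SCG n N) : Prop :=
  ∀ i j, ∀ w x y : G.V, (i + 3 ≤ j ∨ j + 3 ≤ i) →
    G.E i w x → G.E j x y → ∃ v, G.E j w v ∧ G.E i v y

/-- The connected component of `v` in the graph whose edges have colors in `S`. -/
def Comp (G : SCG n N) (S : Set ℕ) (v : G.V) : Set G.V :=
  {w | Relation.ReflTransGen (fun a b => ∃ i ∈ S, G.E i a b) v w}

def Connected (G : SCG n N) : Prop := ∀ v w : G.V, w ∈ G.Comp Set.univ v

/-- Allowed 2-color components (Figure `λ4`): a single vertex, a path with one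
`(i-1)`-edge and one `i`-edge, or a double edge. -/
def Allowed2 (G : SCG n N) (i : ℕ) : Prop :=
  ∀ v : G.V,
    (G.Comp {i - 1, i} v = {v}) ∨
    (∃ a b c : G.V, G.E (i - 1) a b ∧ G.E i b c ∧
        G.Comp {i - 1, i} v = {a, b, c} ∧ ¬G.hasNbr i a ∧ ¬G.hasNbr (i - 1) c) ∨
    (∃ a b : G.V, G.E (i - 1) a b ∧ G.E i a b ∧ G.Comp {i - 1, i} v = {a, b})

/-- The component of `E_{i-2} ∪ E_{i-1} ∪ E_i` containing `v` is one of the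
allowed 3-color components (Figure `λ5`). -/
def Allowed3At (G : SCG n N) (i : ℕ) (v : G.V) : Prop :=
  (G.Comp (Set.Icc (i - 2) i) v = {v}) ∨
  (∃ a b c d : G.V, G.E (i - 2) a b ∧ G.E (i - 1) b c ∧ G.E i c d ∧
      G.Comp (Set.Icc (i - 2) i) v = {a, b, c, d} ∧
      ¬G.hasNbr (i - 1) a ∧ ¬G.hasNbr i a ∧ ¬G.hasNbr i b ∧
      ¬G.hasNbr (i - 2) c ∧ ¬G.hasNbr (i - 2) d ∧ ¬G.hasNbr (i - 1) d) ∨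
  (∃ a b c d e : G.V, G.E (i - 2) a b ∧ G.E (i - 1) a b ∧ G.E i b c ∧
      G.E (i - 2) c d ∧ G.E (i - 1) d e ∧ G.E i d e ∧
      G.Comp (Set.Icc (i - 2) i) v = {a, b, c, d, e} ∧
      ¬G.hasNbr i a ∧ ¬G.hasNbr (i - 1) c ∧ ¬G.hasNbr (i - 2) e) ∨
  (∃ u p w x y z : G.V, G.E (i - 1) u p ∧ G.E (i - 2) p w ∧ G.E i p x ∧
      G.E i w y ∧ G.E (i - 2) x y ∧ G.E (i - 1) y z ∧
      G.Comp (Set.Icc (i - 2) i) v = {u, p, w, x, y, z} ∧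
      ¬G.hasNbr (i - 2) u ∧ ¬G.hasNbr i u ∧ ¬G.hasNbr (i - 1) w ∧
      ¬G.hasNbr (i - 1) x ∧ ¬G.hasNbr (i - 2) z ∧ ¬G.hasNbr i z)

def Allowed3 (G : SCG n N) (i : ℕ) : Prop := ∀ v : G.V, G.Allowed3At i v

/-- Dual equivalence axiom 4. -/
def Ax4 (G : SCG n N) : Prop :=
  (∀ i, 2 < i → i < n → G.Allowed2 i) ∧ (∀ i, 3 < i → i < n → G.Allowed3 i)

/-- Dual equivalence axiom 6. -/
def Ax6 (G : SCG n N) : Prop :=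
  ∀ i, 1 < i → i < n → ∀ v w : G.V, w ∈ G.Comp (Set.Icc 2 i) v →
    (Relation.ReflTransGen (fun a b => ∃ j, 2 ≤ j ∧ j < i ∧ G.E j a b) v w ∨
      ∃ a b, Relation.ReflTransGen (fun a b => ∃ j, 2 ≤ j ∧ j < i ∧ G.E j a b) v a ∧
        G.E i a b ∧
        Relation.ReflTransGen (fun a b => ∃ j, 2 ≤ j ∧ j < i ∧ G.E j a b) b w)

/-- A dual equivalence graph of type `(n, N)`. -/
def IsDEG (G : SCG n N) : Prop :=
  n ≤ N ∧ G.Proper ∧ G.Ax1 ∧ G.Ax2 ∧ G.Ax3 ∧ G.Ax4 ∧ G.Ax5 ∧ G.Ax6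

/-- The `(m, N)`-restriction: keep all signatures, only edges of color `< m`. -/
def restrict (G : SCG n N) (m : ℕ) : SCG m N :=
  ⟨G.V, G.fintypeV, G.sgn, fun j a b => j < m ∧ G.E j a b⟩

end SCG

/-- The multiplicity of the fundamental quasisymmetric function indexed by
`s : Fin (m-1) → Bool` (entry `j` recording the signature position `j+1`) in the
Schur function `s_μ`, via Gessel's expansion over standard Young tableaux. -/
noncomputable def schurFun (m : ℕ) (μ : YoungDiagram) : (Fin (m - 1) → Bool) → ℕ :=
  fun s => Nat.card {T : SYT μ // ∀ j : Fin (m - 1), sytSgn T j.1 = s j}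

namespace SCG

variable {n N : ℕ}

/-- The quasisymmetric generating function of the graph, recorded as the
multiplicity of each fundamental quasisymmetric function `Q_s`. -/
noncomputable def fullGF (G : SCG n N) : (Fin (N - 1) → Bool) → ℕ :=
  fun s => Nat.card {v : G.V // ∀ j : Fin (N - 1), G.sgn v (j.1 + 1) = s j}

/-- The degree-`m` restricted generating function of a set of vertices, using the
signature window `lo, lo+1, …, lo+m-2`. -/
noncomputable def restGF (G : SCG n N) (S : Set G.V) (lo m : ℕ) :
    (Fin (m - 1) → Bool) → ℕ :=
  fun s => Nat.card {v : G.V // v ∈ S ∧ ∀ j : Fin (m - 1), G.sgn v (lo + j.1) = s j}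

/-- `G` is Schur multiplicity-free for degree `m`. -/
def LSF (G : SCG n N) (m : ℕ) : Prop :=
  ∀ i, m - 2 < i → i < n → ∀ v : G.V,
    ∃ μ : YoungDiagram, μ.card = m ∧
      G.restGF (G.Comp (Set.Icc (i - (m - 3)) i) v) (i - (m - 2)) m = schurFun m μ

/-- `G` is Schur positive for degree `m`. -/
def LSP (G : SCG n N) (m : ℕ) : Prop :=
  ∀ i, m - 2 < i → i < n → ∀ v : G.V,
    ∃ c : Multiset YoungDiagram, (∀ μ ∈ c, μ.card = m) ∧
      G.restGF (G.Comp (Set.Icc (i - (m - 3)) i) v) (i - (m - 2)) m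
        = fun s => (c.map (fun μ => schurFun m μ s)).sum

/-- A locally Schur positive graph. -/
def LSPG (G : SCG n N) : Prop :=
  G.Proper ∧ G.Ax1 ∧ G.Ax2 ∧ G.Ax3 ∧ G.Ax5 ∧ G.LSP 4 ∧ G.LSP 5 ∧ G.LSP 6

/-- `w` has a flat `i`-edge. -/
def FlatEdge (G : SCG n N) (i : ℕ) (w : G.V) : Prop :=
  G.hasNbr i w ∧ G.sgn w (i - 2) = G.sgn (G.nbr i w) (i - 2)

/-- `w` has `i`-type W. -/
def TypeW (G : SCG n N) (i : ℕ) (w : G.V) : Prop :=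
  G.hasNbr (i - 1) w ∧ G.sgn w i = !G.sgn (G.nbr (i - 1) w) i

/-- `w` has `i`-type C. -/
def TypeC (G : SCG n N) (i : ℕ) (w : G.V) : Prop :=
  G.hasNbr i w ∧ (G.hasNbr (i - 1) w → G.sgn w i = G.sgn (G.nbr (i - 1) w) i) ∧
  G.hasNbr (i - 2) w ∧
  ((G.hasNbr (i - 1) w ∧ G.sgn w (i - 1) = G.sgn (G.nbr (i - 2) w) (i - 1)) ∨
   (¬G.hasNbr (i - 1) w ∧ G.sgn w i = G.sgn (G.nbr (i - 1) (G.nbr (i - 2) w)) i))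

/-- A non-flat `i`-chain `(w 0, w 1, …, w (2h-1))`. -/
def IsNonflatChain (G : SCG n N) (i h : ℕ) (w : ℕ → G.V) : Prop :=
  (∀ j < 2 * h, ∀ k < 2 * h, j ≠ k → w j ≠ w k) ∧
  (∀ j, 2 * j + 1 < 2 * h → G.E i (w (2 * j)) (w (2 * j + 1))) ∧
  (∀ j, 2 * j + 2 < 2 * h → G.E (i - 1) (w (2 * j + 1)) (w (2 * j + 2)))

/-- The set `W_i(G)`: vertices of `i`-type W admitting an `i`-neighbor with
`E_{i-1}(w) ≠ E_i(w)`. -/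
def Wset (G : SCG n N) (i : ℕ) : Set G.V :=
  {v | G.hasNbr i v ∧ G.TypeW i v ∧ G.nbr (i - 1) v ≠ G.nbr i v}

/-- The set `W_i(G)`, described via non-flat `i`-chains. -/
def WsetChain (G : SCG n N) (i : ℕ) : Set G.V :=
  {v | ∃ h w j, G.IsNonflatChain i h w ∧ 0 < j ∧ j + 2 ≤ 2 * h ∧ v = w j}

/-- One step `E_{i-1} E_{i-2}`. -/
noncomputable def stepWD (G : SCG n N) (i : ℕ) (v : G.V) : G.V :=
  G.nbr (i - 1) (G.nbr (i - 2) v)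

/-- A flat `i`-chain `(x 0, x 1, …, x (2h-1))`. -/
def IsFlatChain (G : SCG n N) (i h : ℕ) (x : ℕ → G.V) : Prop :=
  (∀ j < 2 * h, ∀ k < 2 * h, j ≠ k → x j ≠ x k) ∧
  (∀ j < 2 * h, G.hasNbr (i - 2) (x j)) ∧
  (∀ j, 2 * j + 1 < 2 * h → G.E i (x (2 * j)) (x (2 * j + 1))) ∧
  (∀ j, 2 * j + 2 < 2 * h → ∃ m : ℕ,
      ¬G.TypeW (i - 1) ((G.stepWD i)^[m] (x (2 * j + 1))) ∧
      x (2 * j + 2) = G.nbr (i - 2) ((G.stepWD i)^[m] (x (2 * j + 1))))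

/-- The set `C_i(G)`: vertices strictly inside a flat `i`-chain of length `> 4`. -/
def Cset (G : SCG n N) (i : ℕ) : Set G.V :=
  {v | ∃ h x j, G.IsFlatChain i h x ∧ 2 ≤ j ∧ j + 3 ≤ 2 * h ∧ v = x j}

/-- The `i`-package of `v`: the component using colors `≤ i-3` and `≥ i+3`. -/
def pkg (G : SCG n N) (i : ℕ) (v : G.V) : Set G.V :=
  G.Comp {h | h + 3 ≤ i ∨ i + 3 ≤ h} v

/-- The set `W_i^0(G)`. -/
def W0set (G : SCG n N) (i : ℕ) : Set G.V :=
  {w | w ∈ G.Wset i ∧ ∀ v ∈ G.pkg (i - 1) w, G.FlatEdge (i - 1) v}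

/-- The set `C_i^0(G)`: members of `C_i(G)` such that all vertices between `x` and
`(E_{i-1}E_{i-2})^m E_i(x)` have flat `(i-2)`-edges, where `m ≥ 0` is minimal with
`(E_{i-1}E_{i-2})^m E_i(x)` not of `(i-1)`-type W. -/
def C0set (G : SCG n N) (i : ℕ) : Set G.V :=
  {x | x ∈ G.Cset i ∧ ∀ m : ℕ,
      ((∀ t < m, G.TypeW (i - 1) ((G.stepWD i)^[t] (G.nbr i x))) ∧
          ¬G.TypeW (i - 1) ((G.stepWD i)^[m] (G.nbr i x))) →
        G.FlatEdge (i - 2) x ∧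
        (∀ t ≤ m, G.FlatEdge (i - 2) ((G.stepWD i)^[t] (G.nbr i x))) ∧
        (∀ t < m, G.FlatEdge (i - 2) (G.nbr (i - 2) ((G.stepWD i)^[t] (G.nbr i x))))}

/-- An isomorphism between the `i`-packages `A` and `B`: a signature- and
edge-preserving involution interchanging them. -/
def PkgIso (G : SCG n N) (i : ℕ) (A B : Set G.V) (φ : G.V → G.V) : Prop :=
  (∀ v ∈ A, φ v ∈ B) ∧ (∀ v ∈ B, φ v ∈ A) ∧ (∀ v ∈ A ∪ B, φ (φ v) = v) ∧
  (∀ v ∈ A ∪ B, ∀ h, h + 3 ≤ i ∨ i + 2 ≤ h → G.sgn (φ v) h = G.sgn v h) ∧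
  (∀ a b : G.V, a ∈ A ∪ B → ∀ h, h + 3 ≤ i ∨ i + 3 ≤ h → G.E h a b →
      G.E h (φ a) (φ b))

/-- The new `i`-neighbor of `v` after swapping the `i`-edges on the packages `S`
using the package isomorphism `φ`. -/
noncomputable def swapMap (G : SCG n N) (i : ℕ) (S : Set G.V) (φ : G.V → G.V)
    (v : G.V) : G.V := by
  classical
  exact if v ∈ S then φ v
    else if G.nbr i v ∈ S then G.nbr i (φ (G.nbr i v))
    else G.nbr i v

/-- The transformed graph: replace the `i`-edges by the pairs `{v, swapMap v}`,
keeping all other data. -/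
noncomputable def transform (G : SCG n N) (i : ℕ) (S : Set G.V) (φ : G.V → G.V) :
    SCG n N :=
  ⟨G.V, G.fintypeV, G.sgn, fun j a b =>
    if j = i then
      (G.hasNbr i a ∧ b = G.swapMap i S φ a) ∨ (G.hasNbr i b ∧ a = G.swapMap i S φ b)
    else G.E j a b⟩

/-- All components of `E_{i-2} ∪ E_{i-1} ∪ E_i` have Schur positive restricted
degree-5 generating functions. -/
def LSP5at (G : SCG n N) (i : ℕ) : Prop :=
  ∀ v : G.V, ∃ c : Multiset YoungDiagram, (∀ μ ∈ c, μ.card = 5) ∧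
    G.restGF (G.Comp (Set.Icc (i - 2) i) v) (i - 3) 5
      = fun s => (c.map (fun μ => schurFun 5 μ s)).sum

/-- The set `U_i(G)`: vertices of `W_i^0(G)` (resp. `C_i^0(G)`) whose transformation
`φ_i` (resp. `ψ_i`) keeps all components of `E_{i-2} ∪ E_{i-1} ∪ E_i` Schur positive. -/
def Uset (G : SCG n N) (i : ℕ) : Set G.V :=
  {v | (v ∈ G.W0set i ∧ ∃ φ : G.V → G.V,
          G.PkgIso i (G.pkg i v) (G.pkg i (G.nbr (i - 1) v)) φ ∧
          SCG.LSP5at (G.transform i (G.pkg i v ∪ G.pkg i (G.nbr (i - 1) v)) φ) i) ∨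
       (v ∈ G.C0set i ∧ ∃ m : ℕ,
          (∀ t < m, G.TypeW (i - 1) ((G.stepWD i)^[t] (G.nbr i v))) ∧
          ¬G.TypeW (i - 1) ((G.stepWD i)^[m] (G.nbr i v)) ∧
          ∃ φ : G.V → G.V,
            G.PkgIso i (G.pkg i (G.nbr (i - 2) v))
              (G.pkg i (G.nbr (i - 2) ((G.stepWD i)^[m] (G.nbr i v)))) φ ∧
            SCG.LSP5at (G.transform i (G.pkg i (G.nbr (i - 2) v) ∪
                G.pkg i (G.nbr (i - 2) ((G.stepWD i)^[m] (G.nbr i v)))) φ) i)}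

end SCG

/-!
By Ax5, a path in the `(i-1)`-package of `w` can be rearranged into edges of colors `≤ i - 4`
followed by edges of colors `≥ i + 2`. Ax5 also transports the (unique) `(i-1)`-edge along every
package edge, so by Ax2 the first kind of edge preserves `i`-type W and the second kind preserves
flatness of the `(i-1)`-edge. Finally, a vertex of `i`-type W has a flat `(i-1)`-edge: that edge
cannot be half of a double edge, across which `σ_i` is constant, so it is the `(i-1)`-edge of a path
`a —(i-2)— b —(i-1)— c`, and Ax1 at `b` and at `c` together with Ax2 give `σ(b)_{i-3} = σ(c)_{i-3}`.
-/

namespace Relation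

theorem ReflTransGen.exists_head_of_commute {α : Type*} {r s : α → α → Prop}
    (hc : ∀ a b c, s a b → r b c → ∃ b', r a b' ∧ s b' c) {a b c : α}
    (hab : ReflTransGen s a b) (hbc : r b c) :
    ∃ b', r a b' ∧ ReflTransGen s b' c := by
  induction hab generalizing c with
  | refl => exact ⟨c, hbc, .refl⟩
  | tail _ hs ih =>
    obtain ⟨d, hd, hdc⟩ := hc _ _ _ hs hbc
    obtain ⟨b', hb', hb'd⟩ := ih hd
    exact ⟨b', hb', hb'd.tail hdc⟩

theorem ReflTransGen.exists_of_commute {α : Type*} {r s : α → α → Prop}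
    (hc : ∀ a b c, s a b → r b c → ∃ b', r a b' ∧ s b' c) {a b : α}
    (h : ReflTransGen (fun x y => r x y ∨ s x y) a b) :
    ∃ m, ReflTransGen r a m ∧ ReflTransGen s m b := by
  induction h with
  | refl => exact ⟨a, .refl, .refl⟩
  | tail _ hst ih =>
    obtain ⟨m, ham, hmb⟩ := ih
    rcases hst with hr | hs
    · obtain ⟨m', hm', hm'c⟩ := exists_head_of_commute hc hmb hr
      exact ⟨m', ham.tail hm', hm'c⟩
    · exact ⟨m, ham, hmb.tail hs⟩

end Relation

open Relation

namespace SCG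

variable {n N : ℕ} {G : SCG n N} {i j k : ℕ} {v : G.V}

theorem nbr_spec (h : G.hasNbr k v) : G.E k v (G.nbr k v) := by
  simp only [nbr, dif_pos h]
  exact h.choose_spec

theorem mem_comp_of_E {S : Set ℕ} {x : G.V} (hk : k ∈ S) (h : G.E k v x) : x ∈ G.Comp S v :=
  .single ⟨k, hk, h⟩

theorem Allowed2.eq_of_E (hP : G.Proper) (hA : G.Allowed2 j) (hk : k = j - 1 ∨ k = j)
    {x y : G.V} (hx : G.E k v x) (hy : G.E k v y) : x = y := by
  have hkS : k ∈ ({j - 1, j} : Set ℕ) := hk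
  have hvx := (hP _ _ _ hx).2.1
  have hvy := (hP _ _ _ hy).2.1
  have hv : v ∈ G.Comp {j - 1, j} v := .refl
  have hx' := mem_comp_of_E hkS hx
  have hy' := mem_comp_of_E hkS hy
  rcases hA v with hc | ⟨a, b, c, -, -, hc, hna, hnc⟩ | ⟨a, b, -, -, hc⟩ <;>
    rw [hc] at hv hx' hy' <;> simp only [Set.mem_insert_iff, Set.mem_singleton_iff] at hv hx' hy'
  · exact absurd hx' hvx.symm
  · rcases hk with rfl | rfl
    · have : ∀ z w, G.E (j - 1) z w → z ≠ c ∧ w ≠ c := fun z w h =>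
        ⟨fun hz => hnc (hz ▸ ⟨w, h⟩), fun hw => hnc (hw ▸ ⟨z, (hP _ _ _ h).1⟩)⟩
      grind
    · have : ∀ z w, G.E k z w → z ≠ a ∧ w ≠ a := fun z w h =>
        ⟨fun hz => hna (hz ▸ ⟨w, h⟩), fun hw => hna (hw ▸ ⟨z, (hP _ _ _ h).1⟩)⟩
      grind
  · grind

theorem Allowed2.nbr_eq (hP : G.Proper) (hA : G.Allowed2 j) (hk : k = j - 1 ∨ k = j)
    {x : G.V} (hx : G.E k v x) : G.nbr k v = x :=
  hA.eq_of_E hP hk (nbr_spec ⟨x, hx⟩) hx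

theorem Allowed2.sgn_eq_of_path (hP : G.Proper) (h1 : G.Ax1) (h2 : G.Ax2)
    (hA : G.Allowed2 j) {a b c : G.V} (hab : G.E (j - 1) a b) (hbc : G.E j b c)
    (hnc : ¬G.hasNbr (j - 1) c) : G.sgn b (j - 2) = G.sgn c (j - 2) := by
  obtain ⟨hba, -, hj, hjn⟩ := hP _ _ _ hab
  have hb : G.sgn b (j - 1 - 1) ≠ G.sgn b (j - 1) :=
    (h1 (j - 1) hj hjn b).mpr ⟨a, hba, fun y hy => hA.eq_of_E hP (.inl rfl) hy hba⟩
  have hc : G.sgn c (j - 1 - 1) = G.sgn c (j - 1) :=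
    not_not.mp fun hne => hnc ((h1 (j - 1) hj hjn c).mp hne).exists
  rw [show j - 2 = j - 1 - 1 by omega, hc, (h2 j b c hbc).1, Bool.eq_not_iff.mpr hb]

theorem flatEdge_of_typeW (hP : G.Proper) (h1 : G.Ax1) (h2 : G.Ax2)
    (hA : G.Allowed2 (i - 1)) (hv : G.TypeW i v) : G.FlatEdge (i - 1) v := by
  obtain ⟨hN, hs⟩ := hv
  set y := G.nbr (i - 1) v
  have hvy : G.E (i - 1) v y := nbr_spec hN
  have hvy' := (hP _ _ _ hvy).2.1
  refine ⟨hN, ?_⟩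
  have hv : v ∈ G.Comp {i - 1 - 1, i - 1} v := .refl
  have hy : y ∈ G.Comp {i - 1 - 1, i - 1} v := mem_comp_of_E (.inr rfl) hvy
  rcases hA v with hc | ⟨a, b, c, hab, hbc, hc, hna, hnc⟩ | ⟨a, b, hab, -, hc⟩ <;>
    rw [hc] at hv hy <;> simp only [Set.mem_insert_iff, Set.mem_singleton_iff] at hv hy
  · exact absurd hy hvy'.symm
  · have hsgn := hA.sgn_eq_of_path hP h1 h2 hab hbc hnc
    have hya : y ≠ a := fun h => hna (h ▸ ⟨v, (hP _ _ _ hvy).1⟩)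
    have hva : v ≠ a := fun h => hna (h ▸ hN)
    grind
  · obtain ⟨-, -, hi, -⟩ := hP _ _ _ hab
    have hsab : G.sgn b i = G.sgn a i := (h2 _ a b hab).2.2 i (.inr (by omega))
    grind

theorem E_nbr_of_E (hP : G.Proper) (h5 : G.Ax5) (hA : G.Allowed2 j)
    (hjk : j + 3 ≤ k ∨ k + 3 ≤ j) {v' : G.V} (he : G.E k v v') (hv : G.hasNbr j v) :
    G.hasNbr j v' ∧ G.E k (G.nbr j v) (G.nbr j v') := by
  obtain ⟨u, hu, hu'⟩ := h5 j k _ v v' hjk (hP _ _ _ (nbr_spec hv)).1 he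
  have hv'u : G.E j v' u := (hP _ _ _ hu').1
  exact ⟨⟨u, hv'u⟩, hA.nbr_eq hP (.inr rfl) hv'u ▸ hu⟩

theorem typeW_of_E (hP : G.Proper) (h2 : G.Ax2) (h5 : G.Ax5) (hA : G.Allowed2 (i - 1))
    (hk : k + 3 ≤ i - 1) {v' : G.V} (he : G.E k v v') (hv : G.TypeW i v) : G.TypeW i v' := by
  obtain ⟨hN, hE⟩ := E_nbr_of_E hP h5 hA (.inr hk) he hv.1
  refine ⟨hN, ?_⟩
  rw [(h2 k v v' he).2.2 i (.inr (by omega)), (h2 k _ _ hE).2.2 i (.inr (by omega)), hv.2]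

theorem flatEdge_of_E (hP : G.Proper) (h2 : G.Ax2) (h5 : G.Ax5) (hA : G.Allowed2 j)
    (hk : j + 3 ≤ k) {v' : G.V} (he : G.E k v v') (hv : G.FlatEdge j v) :
    G.FlatEdge j v' := by
  obtain ⟨hN, hE⟩ := E_nbr_of_E hP h5 hA (.inl hk) he hv.1
  refine ⟨hN, ?_⟩
  rw [(h2 k v v' he).2.2 (j - 2) (.inl (by omega)), (h2 k _ _ hE).2.2 (j - 2) (.inl (by omega)),
    hv.2]

theorem exists_low_high_of_mem_pkg (h5 : G.Ax5) {w : G.V} (hv : v ∈ G.pkg j w) :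
    ∃ m, ReflTransGen (fun a b => ∃ k, k + 3 ≤ j ∧ G.E k a b) w m ∧
      ReflTransGen (fun a b => ∃ k, j + 3 ≤ k ∧ G.E k a b) m v := by
  refine ReflTransGen.exists_of_commute ?_ (ReflTransGen.mono ?_ _ _ hv)
  · rintro a b c ⟨k, hk, hab⟩ ⟨l, hl, hbc⟩
    obtain ⟨b', hab', hb'c⟩ := h5 k l a b c (.inr (by omega)) hab hbc
    exact ⟨b', ⟨l, hl, hab'⟩, ⟨k, hk, hb'c⟩⟩
  · rintro a b ⟨k, hk | hk, hab⟩
    exacts [.inl ⟨k, hk, hab⟩, .inr ⟨k, hk, hab⟩]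

end SCG

theorem statement10_general (n N i : ℕ) (G : SCG n N)
    (hP : G.Proper) (h1 : G.Ax1) (h2 : G.Ax2) (h5 : G.Ax5)
    (hAll : G.Allowed2 (i - 1)) :
    G.W0set i = G.Wset i := by
  refine Set.Subset.antisymm (fun w hw => hw.1) fun w hw => ⟨hw, fun v hv => ?_⟩
  obtain ⟨m, hwm, hmv⟩ := SCG.exists_low_high_of_mem_pkg h5 hv
  have hm : G.TypeW i m := ReflTransGen.rec (motive := fun b _ => G.TypeW i b) hw.2.1
    (fun _ ⟨_, hk, he⟩ ih => SCG.typeW_of_E hP h2 h5 hAll hk he ih) hwm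
  exact ReflTransGen.rec (motive := fun b _ => G.FlatEdge (i - 1) b)
    (SCG.flatEdge_of_typeW hP h1 h2 hAll hm)
    (fun _ ⟨_, hk, he⟩ ih => SCG.flatEdge_of_E hP h2 h5 hAll hk he ih) hmv

/-- If every component of `E_{i-2} ∪ E_{i-1}` is allowed, then `W_i^0(G) = W_i(G)`. -/
theorem statement10 (n N i : ℕ) (hi : 3 < i) (hin : i < n) (G : SCG n N)
    (hP : G.Proper) (h1 : G.Ax1) (h2 : G.Ax2) (h3 : G.Ax3) (h5 : G.Ax5)
    (hAll : G.Allowed2 (i - 1)) :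
    G.W0set i = G.Wset i :=
  statement10_general n N i G hP h1 h2 h5 hAll
end

section
/- Let G be a dual equivalence graph of type (n,N) (axioms 1–6). For any 3 ≤ i ≤ n with i < N, every non-flat i-chain in G has length at most 2, and every flat i-chain in G has length at most 4; moreover a flat i-chain of length 4 forms a cycle: its first and last vertices are joined by an (i-2)-edge. -/
open Finset

/-!
A chain has distinct vertices lying in one component of `E_{i-1} ∪ E_i` (non-flat) or of
`E_{i-2} ∪ E_{i-1} ∪ E_i` (flat), so its length is bounded by what an allowed component can hold.
An allowed two-colour component has at most three vertices. Every vertex of a flat chain is an end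
of an `i`-edge between two vertices carrying `(i-2)`-edges (a "rung"), and an allowed
three-colour component has at most two rung ends, except the hexagon, which has four: the square
of alternating `(i-2)`- and `i`-edges. A flat chain of length four therefore runs around that
square; as `E_{i-1} E_{i-2}` preserves the two halves `{u, p, w}` and `{x, y, z}` of the hexagon,
its middle step is an `(i-2)`-edge of the square, and the chain closes up.
-/

lemma eq_or_eq_or_eq_of_mem_pair {α : Type*} {a b u v w : α} (hu : u ∈ ({a, b} : Set α))
    (hv : v ∈ ({a, b} : Set α)) (hw : w ∈ ({a, b} : Set α)) : u = v ∨ u = w ∨ v = w := by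
  rcases hu with rfl | rfl <;> rcases hv with rfl | rfl <;> rcases hw with rfl | rfl <;> simp

lemma le_length_of_pairwise_ne {α : Type*} {x : ℕ → α} {k : ℕ} {L : List α}
    (hne : ∀ j < k, ∀ l < k, j ≠ l → x j ≠ x l) (hx : ∀ j < k, x j ∈ L) : k ≤ L.length := by
  classical
  calc k = (Finset.range k).card := (Finset.card_range k).symm
    _ ≤ L.toFinset.card := by
      refine Finset.card_le_card_of_injOn x (fun j hj => by simpa using hx j (by simpa using hj))
        fun j hj l hl hjl => ?_
      by_contra h
      exact hne j (by simpa using hj) l (by simpa using hl) h hjl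
    _ ≤ L.length := List.toFinset_card_le L

namespace SCG

variable {n N : ℕ} {G : SCG n N} {i j h : ℕ}

lemma E_nbr {v : G.V} (hv : G.hasNbr j v) : G.E j v (G.nbr j v) := by
  unfold nbr
  rw [dif_pos hv]
  exact hv.choose_spec

lemma nbr_of_not_hasNbr {v : G.V} (hv : ¬G.hasNbr j v) : G.nbr j v = v := by
  unfold nbr
  rw [dif_neg hv]

lemma nbr_eq_of_E (hu : Relator.RightUnique (G.E j)) {v a : G.V} (hva : G.E j v a) :
    G.nbr j v = a :=
  hu (E_nbr ⟨a, hva⟩) hva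

lemma mem_Comp_self (S : Set ℕ) (v : G.V) : v ∈ G.Comp S v := Relation.ReflTransGen.refl

lemma mem_Comp_of_E {S : Set ℕ} {v a b : G.V} (ha : a ∈ G.Comp S v) (hj : j ∈ S)
    (hab : G.E j a b) : b ∈ G.Comp S v :=
  ha.tail ⟨j, hj, hab⟩

lemma nbr_mem_Comp {S : Set ℕ} {v a : G.V} (ha : a ∈ G.Comp S v) (hj : j ∈ S) :
    G.nbr j a ∈ G.Comp S v := by
  by_cases hn : G.hasNbr j a
  · exact mem_Comp_of_E ha hj (E_nbr hn)
  · rwa [nbr_of_not_hasNbr hn]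

lemma stepWD_iterate_mem_Comp {v a : G.V} (ha : a ∈ G.Comp (Set.Icc (i - 2) i) v) (m : ℕ) :
    (G.stepWD i)^[m] a ∈ G.Comp (Set.Icc (i - 2) i) v := by
  induction m with
  | zero => exact ha
  | succ m ih =>
    rw [Function.iterate_succ_apply']
    exact nbr_mem_Comp (nbr_mem_Comp ih ⟨le_rfl, by omega⟩) ⟨by omega, by omega⟩

lemma Allowed2.Comp_subset {k : ℕ} (hA : G.Allowed2 k) (v : G.V) :
    ∃ a b c, G.Comp {k - 1, k} v ⊆ {a, b, c} := by
  rcases hA v with hc | ⟨a, b, c, -, -, hc, -⟩ | ⟨a, b, -, -, hc⟩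
  · exact ⟨v, v, v, by simp [hc]⟩
  · exact ⟨a, b, c, hc.le⟩
  · exact ⟨a, b, b, by simp [hc]⟩

/-- In an allowed two-colour component no vertex has two distinct edges of the same colour:
their three endpoints would all carry that colour, but at most two vertices of the component do. -/
lemma Allowed2.rightUnique (hp : G.Proper) {k : ℕ} (hA : G.Allowed2 k) (hj : j = k - 1 ∨ j = k) :
    Relator.RightUnique (G.E j) := by
  intro v a b ha hb
  by_contra hab
  have hS : j ∈ ({k - 1, k} : Set ℕ) := hj
  have hv := mem_Comp_self (G := G) {k - 1, k} v
  have ha' := mem_Comp_of_E hv hS ha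
  have hb' := mem_Comp_of_E hv hS hb
  have hnv : G.hasNbr j v := ⟨a, ha⟩
  have hna : G.hasNbr j a := ⟨v, (hp _ _ _ ha).1⟩
  have hnb : G.hasNbr j b := ⟨v, (hp _ _ _ hb).1⟩
  have distinct : ∀ e₁ e₂ : G.V, v ∈ ({e₁, e₂} : Set G.V) → a ∈ ({e₁, e₂} : Set G.V) →
      b ∈ ({e₁, e₂} : Set G.V) → False := fun e₁ e₂ hv₁ ha₁ hb₁ => by
    rcases eq_or_eq_or_eq_of_mem_pair hv₁ ha₁ hb₁ with h | h | h
    exacts [(hp _ _ _ ha).2.1 h, (hp _ _ _ hb).2.1 h, hab h]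
  rcases hA v with hc | ⟨a₀, b₀, c₀, -, -, hc, ha₀, hc₀⟩ | ⟨a₀, b₀, -, -, hc⟩
  · rw [hc] at ha'
    exact (hp _ _ _ ha).2.1 ha'.symm
  · rw [hc] at hv ha' hb'
    rcases hj with hj | hj
    · have hpair : ∀ t ∈ ({a₀, b₀, c₀} : Set G.V), G.hasNbr j t → t ∈ ({a₀, b₀} : Set G.V) := by
        rintro t (rfl | rfl | rfl) ht
        exacts [Or.inl rfl, Or.inr rfl, absurd (hj ▸ ht) hc₀]
      exact distinct a₀ b₀ (hpair v hv hnv) (hpair a ha' hna) (hpair b hb' hnb)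
    · have hpair : ∀ t ∈ ({a₀, b₀, c₀} : Set G.V), G.hasNbr j t → t ∈ ({b₀, c₀} : Set G.V) := by
        rintro t (rfl | rfl | rfl) ht
        exacts [absurd (hj ▸ ht) ha₀, Or.inl rfl, Or.inr rfl]
      exact distinct b₀ c₀ (hpair v hv hnv) (hpair a ha' hna) (hpair b hb' hnb)
  · rw [hc] at hv ha' hb'
    exact distinct a₀ b₀ hv ha' hb'

lemma IsNonflatChain.mem_Comp {w : ℕ → G.V} (hc : G.IsNonflatChain i h w) :
    ∀ j < 2 * h, w j ∈ G.Comp {i - 1, i} (w 0) := by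
  intro j
  induction j with
  | zero => exact fun _ => mem_Comp_self _ _
  | succ j ih =>
    intro hj
    obtain ⟨t, rfl | rfl⟩ := Nat.even_or_odd' j
    · exact mem_Comp_of_E (ih (by omega)) (Set.mem_insert_of_mem _ rfl) (hc.2.1 t (by omega))
    · exact mem_Comp_of_E (ih (by omega)) (Set.mem_insert _ _) (hc.2.2 t (by omega))

lemma IsNonflatChain.le_one (hp : G.Proper) (hA : ∀ k, 2 < k → k < n → G.Allowed2 k)
    {w : ℕ → G.V} (hc : G.IsNonflatChain i h w) : h ≤ 1 := by
  by_contra! hh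
  have e01 := hc.2.1 0 (by omega)
  have e12 := hc.2.2 0 (by omega)
  have hi : 2 < i := by have := (hp _ _ _ e12).2.2.1; omega
  obtain ⟨a, b, c, habc⟩ := (hA i hi (hp _ _ _ e01).2.2.2).Comp_subset (w 0)
  have := le_length_of_pairwise_ne (k := 4) (L := [a, b, c])
    (fun j hj l hl => hc.1 j (by omega) l (by omega))
    (fun j hj => by simpa using habc (hc.mem_Comp j (by omega)))
  simp at this

lemma IsFlatChain.mem_Comp {x : ℕ → G.V} (hc : G.IsFlatChain i h x) :
    ∀ j < 2 * h, x j ∈ G.Comp (Set.Icc (i - 2) i) (x 0) := by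
  intro j
  induction j with
  | zero => exact fun _ => mem_Comp_self _ _
  | succ j ih =>
    intro hj
    obtain ⟨t, rfl | rfl⟩ := Nat.even_or_odd' j
    · exact mem_Comp_of_E (ih (by omega)) ⟨by omega, le_rfl⟩ (hc.2.2.1 t (by omega))
    · obtain ⟨m, -, hx⟩ := hc.2.2.2 t (by omega)
      rw [show 2 * t + 1 + 1 = 2 * t + 2 by rfl, hx]
      exact nbr_mem_Comp (stepWD_iterate_mem_Comp (ih (by omega)) m) ⟨le_rfl, by omega⟩

def rungEnds (G : SCG n N) (i : ℕ) : Set G.V :=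
  {v | G.hasNbr (i - 2) v ∧ ∃ u, G.E i v u ∧ G.hasNbr (i - 2) u}

lemma IsFlatChain.mem_rungEnds (hp : G.Proper) {x : ℕ → G.V} (hc : G.IsFlatChain i h x) :
    ∀ j < 2 * h, x j ∈ G.rungEnds i := by
  intro j hj
  refine ⟨hc.2.1 j hj, ?_⟩
  obtain ⟨t, rfl | rfl⟩ := Nat.even_or_odd' j
  · exact ⟨x (2 * t + 1), hc.2.2.1 t (by omega), hc.2.1 _ (by omega)⟩
  · exact ⟨x (2 * t), (hp _ _ _ (hc.2.2.1 t (by omega))).1, hc.2.1 _ (by omega)⟩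

/-- The last allowed component of `Allowed3At`: a square `p w y x` whose sides are alternately
`(i-2)`- and `i`-edges, with pendant `(i-1)`-edges `u p` and `y z`. -/
structure IsHexagon (G : SCG n N) (i : ℕ) (u p w x y z : G.V) : Prop where
  up : G.E (i - 1) u p
  pw : G.E (i - 2) p w
  px : G.E i p x
  wy : G.E i w y
  xy : G.E (i - 2) x y
  yz : G.E (i - 1) y z
  not_hasNbr_u : ¬G.hasNbr (i - 2) u
  not_hasNbr_w : ¬G.hasNbr (i - 1) w
  not_hasNbr_x : ¬G.hasNbr (i - 1) x
  not_hasNbr_z : ¬G.hasNbr (i - 2) z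

lemma IsHexagon.symm (hp : G.Proper) {u p w x y z : G.V} (hX : G.IsHexagon i u p w x y z) :
    G.IsHexagon i z y x w p u where
  up := (hp _ _ _ hX.yz).1
  pw := (hp _ _ _ hX.xy).1
  px := (hp _ _ _ hX.wy).1
  wy := (hp _ _ _ hX.px).1
  xy := (hp _ _ _ hX.pw).1
  yz := (hp _ _ _ hX.up).1
  not_hasNbr_u := hX.not_hasNbr_z
  not_hasNbr_w := hX.not_hasNbr_x
  not_hasNbr_x := hX.not_hasNbr_w
  not_hasNbr_z := hX.not_hasNbr_u

lemma Allowed3At.rungEnds_subset (hI : Relator.RightUnique (G.E i)) {v : G.V}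
    (hA : G.Allowed3At i v) :
    (∃ a b, G.Comp (Set.Icc (i - 2) i) v ∩ G.rungEnds i ⊆ {a, b}) ∨
      ∃ u p w x y z, G.IsHexagon i u p w x y z ∧
        G.Comp (Set.Icc (i - 2) i) v ∩ G.rungEnds i ⊆ {p, w, x, y} := by
  rcases hA with hc | ⟨a, b, c, d, -, -, -, hc, -, -, -, hnc, hnd, -⟩ |
    ⟨a, b, c, d, e, -, -, -, -, -, hde, hc, hna, -, hne⟩ |
    ⟨u, p, w, x, y, z, hup, hpw, hpx, hwy, hxy, hyz, hc, hnu, -, hnw, hnx, hnz, -⟩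
  · exact Or.inl ⟨v, v, by simp [hc]⟩
  · refine Or.inl ⟨a, b, ?_⟩
    rw [hc]
    rintro t ⟨rfl | rfl | rfl | rfl, ht, -⟩ <;> simp_all
  · refine Or.inl ⟨b, c, ?_⟩
    rw [hc]
    rintro t ⟨rfl | rfl | rfl | rfl | rfl, ht, t', htt', ht'⟩
    · exact absurd ⟨t', htt'⟩ hna
    · simp
    · simp
    · exact absurd (hI htt' hde ▸ ht') hne
    · exact absurd ht hne
  · refine Or.inr ⟨u, p, w, x, y, z, ⟨hup, hpw, hpx, hwy, hxy, hyz, hnu, hnw, hnx, hnz⟩, ?_⟩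
    rw [hc]
    rintro t ⟨rfl | rfl | rfl | rfl | rfl | rfl, ht, -⟩ <;> simp_all

lemma IsFlatChain.three_lt_and_lt (hp : G.Proper) {c : ℕ → G.V} (hc : G.IsFlatChain i h c)
    (hh : 0 < h) : 3 < i ∧ i < n := by
  obtain ⟨t, ht⟩ := hc.2.1 0 (by omega)
  have := (hp _ _ _ ht).2.2.1
  exact ⟨by omega, (hp _ _ _ (hc.2.2.1 0 (by omega))).2.2.2⟩

lemma IsFlatChain.le_two (hp : G.Proper) (h4 : G.Ax4) {c : ℕ → G.V}
    (hc : G.IsFlatChain i h c) : h ≤ 2 := by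
  by_contra! hh
  obtain ⟨hi, hin⟩ := hc.three_lt_and_lt hp (by omega)
  have hI := (h4.1 i (by omega) hin).rightUnique hp (Or.inr rfl)
  have hmem : ∀ j < 5, c j ∈ G.Comp (Set.Icc (i - 2) i) (c 0) ∩ G.rungEnds i :=
    fun j hj => ⟨hc.mem_Comp j (by omega), hc.mem_rungEnds hp j (by omega)⟩
  have hne : ∀ j < 5, ∀ l < 5, j ≠ l → c j ≠ c l := fun j _ l _ => hc.1 j (by omega) l (by omega)
  rcases (h4.2 i hi hin (c 0)).rungEnds_subset hI with
    ⟨a, b, hab⟩ | ⟨-, p, w, x, y, -, -, hsub⟩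
  · have := le_length_of_pairwise_ne (L := [a, b]) hne fun j hj => by simpa using hab (hmem j hj)
    simp at this
  · have := le_length_of_pairwise_ne (L := [p, w, x, y]) hne
      fun j hj => by simpa using hsub (hmem j hj)
    simp at this

/-- The `stepWD`-orbit of `x` never leaves the triangle `x z y`, so on a flat chain entering
the hexagon at `p` or `w` the step `c 1 ↦ c 2` is an `(i-2)`-edge of the square. -/
lemma IsHexagon.E_zero_three_of_isFlatChain {u p w x y z : G.V} (hX : G.IsHexagon i u p w x y z)
    (hp : G.Proper) (hI₂ : Relator.RightUnique (G.E (i - 2)))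
    (hI₁ : Relator.RightUnique (G.E (i - 1))) (hI : Relator.RightUnique (G.E i))
    {c : ℕ → G.V} (hc : G.IsFlatChain i 2 c) (h0 : c 0 = p ∨ c 0 = w) :
    G.E (i - 2) (c 0) (c 3) := by
  obtain ⟨hne, hnbr, hE, hstep⟩ := hc
  have e01 : G.E i (c 0) (c 1) := hE 0 (by omega)
  have e23 : G.E i (c 2) (c 3) := hE 1 (by omega)
  obtain ⟨m, -, hc2⟩ := hstep 0 (by omega)
  replace hc2 : c 2 = G.nbr (i - 2) ((G.stepWD i)^[m] (c 1)) := hc2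
  have nx : G.nbr (i - 2) x = y := nbr_eq_of_E hI₂ hX.xy
  have ny : G.nbr (i - 2) y = x := nbr_eq_of_E hI₂ (hp _ _ _ hX.xy).1
  have hB : Set.MapsTo (G.stepWD i) {x, y, z} {x, y, z} := by
    rintro t (rfl | rfl | rfl) <;> simp only [stepWD]
    · simp [nx, nbr_eq_of_E hI₁ hX.yz]
    · simp [ny, nbr_of_not_hasNbr hX.not_hasNbr_x]
    · simp [nbr_of_not_hasNbr hX.not_hasNbr_z, nbr_eq_of_E hI₁ (hp _ _ _ hX.yz).1]
  have hc1 : c 1 = x ∨ c 1 = y :=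
    h0.imp (fun h0 : c 0 = p => hI e01 (h0 ▸ hX.px)) (fun h0 : c 0 = w => hI e01 (h0 ▸ hX.wy))
  have hc2' : c 2 = x ∨ c 2 = y := by
    have hs := hB.iterate m (show c 1 ∈ ({x, y, z} : Set G.V) by rcases hc1 with h | h <;> simp [h])
    rcases hs with hs | hs | hs <;> rw [hs] at hc2
    · exact Or.inr (hc2.trans nx)
    · exact Or.inl (hc2.trans ny)
    · rw [nbr_of_not_hasNbr hX.not_hasNbr_z] at hc2
      exact absurd (hc2 ▸ hnbr 2 (by omega)) hX.not_hasNbr_z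
  have d12 : c 1 ≠ c 2 := hne 1 (by omega) 2 (by omega) (by omega)
  rcases h0 with h0 | h0
  · have h1 : c 1 = x := hI e01 (h0 ▸ hX.px)
    have h2 : c 2 = y := hc2'.resolve_left (h1 ▸ d12.symm)
    rw [h0, hI e23 (h2 ▸ (hp _ _ _ hX.wy).1)]
    exact hX.pw
  · have h1 : c 1 = y := hI e01 (h0 ▸ hX.wy)
    have h2 : c 2 = x := hc2'.resolve_right (h1 ▸ d12.symm)
    rw [h0, hI e23 (h2 ▸ (hp _ _ _ hX.px).1)]
    exact (hp _ _ _ hX.pw).1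

lemma IsFlatChain.E_zero_three (hp : G.Proper) (h4 : G.Ax4) {c : ℕ → G.V}
    (hc : G.IsFlatChain i 2 c) : G.E (i - 2) (c 0) (c 3) := by
  obtain ⟨hi, hin⟩ := hc.three_lt_and_lt hp (by omega)
  have hI := (h4.1 i (by omega) hin).rightUnique hp (Or.inr rfl)
  have hI₁ := (h4.1 i (by omega) hin).rightUnique hp (Or.inl rfl)
  have hI₂ := (h4.1 (i - 1) (by omega) (by omega)).rightUnique hp (j := i - 2) (Or.inl (by omega))
  have hmem : ∀ j < 4, c j ∈ G.Comp (Set.Icc (i - 2) i) (c 0) ∩ G.rungEnds i :=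
    fun j hj => ⟨hc.mem_Comp j (by omega), hc.mem_rungEnds hp j (by omega)⟩
  rcases (h4.2 i hi hin (c 0)).rungEnds_subset hI with ⟨a, b, hab⟩ | ⟨u, p, w, x, y, z, hX, hsub⟩
  · have := le_length_of_pairwise_ne (L := [a, b]) hc.1 fun j hj => by simpa using hab (hmem j hj)
    simp at this
  · rcases hsub (hmem 0 (by omega)) with h0 | h0 | h0 | h0
    · exact hX.E_zero_three_of_isFlatChain hp hI₂ hI₁ hI hc (Or.inl h0)
    · exact hX.E_zero_three_of_isFlatChain hp hI₂ hI₁ hI hc (Or.inr h0)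
    · exact (hX.symm hp).E_zero_three_of_isFlatChain hp hI₂ hI₁ hI hc (Or.inr h0)
    · exact (hX.symm hp).E_zero_three_of_isFlatChain hp hI₂ hI₁ hI hc (Or.inl h0)

end SCG

theorem statement11_general (n N : ℕ) (G : SCG n N) (hd : G.IsDEG)
    (i : ℕ) :
    (∀ (h : ℕ) (w : ℕ → G.V), G.IsNonflatChain i h w → h ≤ 1) ∧
    (∀ (h : ℕ) (x : ℕ → G.V), G.IsFlatChain i h x → h ≤ 2) ∧
    (∀ x : ℕ → G.V, G.IsFlatChain i 2 x → G.E (i - 2) (x 0) (x 3)) := by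
  obtain ⟨-, hp, -, -, -, h4, -, -⟩ := hd
  exact ⟨fun _ _ hc => hc.le_one hp h4.1, fun _ _ hc => hc.le_two hp h4,
    fun _ hc => hc.E_zero_three hp h4⟩

/-- In a dual equivalence graph, non-flat `i`-chains have length at most 2, flat
`i`-chains have length at most 4, and a flat `i`-chain of length 4 forms a cycle. -/
theorem statement11 (n N : ℕ) (G : SCG n N) (hd : G.IsDEG)
    (i : ℕ) (h3 : 3 ≤ i) (hn : i ≤ n) (hN : i < N) :
    (∀ (h : ℕ) (w : ℕ → G.V), G.IsNonflatChain i h w → h ≤ 1) ∧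
    (∀ (h : ℕ) (x : ℕ → G.V), G.IsFlatChain i h x → h ≤ 2) ∧
    (∀ x : ℕ → G.V, G.IsFlatChain i 2 x → G.E (i - 2) (x 0) (x 3)) :=
  statement11_general n N G hd i
end
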